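/- Let $n \geq 3$ and let $L : (\mathbb{Z}/n\mathbb{Z})^d \to \{C, A, T\}$ be a labeling. Define $\#(AC) + \#(AT)$ as the number of ordered pairs $(x, v)$ with $x \in (\mathbb{Z}/n\mathbb{Z})^d$, $v \in \{-1,0,1\}^d \setminus \{0\}$, $L(x) = A$, and $L(x+v) \in \{C, T\}$. Then $\#(AC) + \#(AT) \leq 3^{d-1} n^d$. -/

import Mathlib

open Finset

inductive Letter | C | A | T
deriving DecidableEq

/-!
Let `a` be the indicator of the `A`-sites, `s = ∑ a` and `N = |R| ^ d`. The count equals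
`3 ^ d * s - ∑_{v ∈ K} c v`, where `K = {-1, 0, 1} ^ d` and `c v = ∑ x, a x * a (x + v)`, so
it suffices that `∑_{v ∈ K} c v + 3 ^ (d - 1) * c 0 ≥ 4 * 3 ^ (d - 1) * s ^ 2 / N`: the count is
then at most `3 ^ (d - 1) * (4 * s - 4 * s ^ 2 / N) ≤ 3 ^ (d - 1) * N`.

With `S` the unit shift of one coordinate, `4 (1 + S + S⁻¹) = 3 (1 + S)(1 + S⁻¹) - (1 - S)(1 - S⁻¹)`
and `4 = (1 + S)(1 + S⁻¹) + (1 - S)(1 - S⁻¹)`. Expanding the tensor products over the coordinates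
writes `4 ^ d` times the quadratic form as `∑_T c_T ‖D_T a‖²`, where `D_T` applies `1 + S_j` for
`j ∈ T` and `1 - S_j` otherwise, and `c_T = 3 ^ (d - 1) + (-1) ^ (d - |T|) * 3 ^ |T| ≥ 0`. Keeping
only `T = univ`, for which `∑ D_T a = 2 ^ d * s`, Cauchy–Schwarz gives the bound.
-/

namespace KingGraph

section Autocorrelation

variable {G : Type*} [AddCommGroup G] [Fintype G]

noncomputable def autocorr (f : G → ℝ) (δ : G) : ℝ := ∑ x, f x * f (x + δ)

lemma sum_mul_shift_eq_autocorr (f : G → ℝ) (a b : G) :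
    ∑ y, f (y + a) * f (y + b) = autocorr f (b - a) :=
  Fintype.sum_equiv (Equiv.addRight a) _ _ fun y => by
    simp only [Equiv.coe_addRight, add_add_sub_cancel]

theorem sum_sq_sum_mul_shift [DecidableEq G] {κ : Type*} [Fintype κ] (f : G → ℝ) (w : κ → ℝ)
    (u : κ → G) :
    ∑ y, (∑ k, w k * f (y + u k)) ^ 2 =
      ∑ δ, (∑ k, ∑ k', if δ = u k' - u k then w k * w k' else 0) * autocorr f δ := by
  calc ∑ y, (∑ k, w k * f (y + u k)) ^ 2
      = ∑ k, ∑ k', w k * w k' * ∑ y, f (y + u k) * f (y + u k') := by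
        simp_rw [sq, sum_mul_sum, mul_sum]
        rw [sum_comm]
        refine sum_congr rfl fun k _ => ?_
        rw [sum_comm]
        exact sum_congr rfl fun k' _ => sum_congr rfl fun y _ => by ring
    _ = ∑ δ, (∑ k, ∑ k', if δ = u k' - u k then w k * w k' else 0) * autocorr f δ := by
        simp_rw [sum_mul, ite_mul, zero_mul, sum_mul_shift_eq_autocorr]
        rw [eq_comm, sum_comm]
        refine sum_congr rfl fun k _ => ?_
        rw [sum_comm]
        simp

end Autocorrelation

section Kernels

variable {R : Type*} [CommRing R] [DecidableEq R]

noncomputable def kingKernel (t : R) : ℝ :=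
  (if t = 0 then 1 else 0) + (if t = 1 then 1 else 0) + (if t = -1 then 1 else 0)

-- the autocorrelations of `δ₀ + δ₁` and of `δ₀ - δ₁` on `R`
noncomputable def sumKernel (t : R) : ℝ :=
  2 * (if t = 0 then 1 else 0) + (if t = 1 then 1 else 0) + (if t = -1 then 1 else 0)

noncomputable def diffKernel (t : R) : ℝ :=
  2 * (if t = 0 then 1 else 0) - (if t = 1 then 1 else 0) - (if t = -1 then 1 else 0)

lemma four_mul_kingKernel (t : R) : 4 * kingKernel t = 3 * sumKernel t + -diffKernel t := by
  unfold kingKernel sumKernel diffKernel; ring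

lemma sumKernel_add_diffKernel (t : R) :
    sumKernel t + diffKernel t = 4 * if t = 0 then 1 else 0 := by
  unfold sumKernel diffKernel; ring

lemma sum_kingKernel [Fintype R] : ∑ t : R, kingKernel t = 3 := by
  simp only [kingKernel, sum_add_distrib, sum_ite_eq', mem_univ, if_true]
  norm_num

lemma kingKernel_eq_ite (h2 : (2 : R) ≠ 0) (t : R) :
    kingKernel t = if t = 0 ∨ t = 1 ∨ t = -1 then 1 else 0 := by
  have h10 : (1 : R) ≠ 0 := fun h => h2 (by rw [← one_add_one_eq_two, h, add_zero])
  have h1m : (1 : R) ≠ -1 := fun h => h2 (by rw [← one_add_one_eq_two]; nth_rw 2 [h]; ring)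
  unfold kingKernel
  by_cases h0 : t = 0 <;> by_cases h1 : t = 1 <;> by_cases hm : t = -1 <;> simp_all

variable {ι : Type*} [DecidableEq ι]

def signWeight (T : Finset ι) (j : ι) (b : Bool) : ℝ := if j ∉ T ∧ b then -1 else 1

lemma sum_sum_signWeight (T : Finset ι) (j : ι) (t : R) :
    (∑ b, ∑ b', if t = (if b' then 1 else 0) - (if b then 1 else 0)
        then signWeight T j b * signWeight T j b' else 0) =
      if j ∈ T then sumKernel t else diffKernel t := by
  by_cases hj : j ∈ T <;>
    simp only [Fintype.sum_bool, signWeight, sumKernel, diffKernel, hj, if_true, if_false,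
      Bool.false_eq_true, sub_self, sub_zero, zero_sub, neg_zero, not_true, not_false_eq_true,
      and_true, and_false] <;> split_ifs <;> norm_num

end Kernels

section MixedDifferences

variable {ι R : Type*} [Fintype ι] [DecidableEq ι] [CommRing R]

def corner (ε : ι → Bool) : ι → R := fun j => if ε j then 1 else 0

noncomputable def mixedDiff (T : Finset ι) (f : (ι → R) → ℝ) (y : ι → R) : ℝ :=
  ∑ ε : ι → Bool, (∏ j, signWeight T j (ε j)) * f (y + corner ε)

lemma sum_mixedDiff_univ [Fintype R] (f : (ι → R) → ℝ) :
    ∑ y, mixedDiff univ f y = 2 ^ Fintype.card ι * ∑ x, f x := by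
  have hshift (a : ι → R) : ∑ y, f (y + a) = ∑ x, f x := Equiv.sum_comp (Equiv.addRight a) f
  simp only [mixedDiff, signWeight, mem_univ, not_true, false_and, if_false, prod_const_one,
    one_mul]
  rw [sum_comm]
  simp [hshift]

lemma sum_sum_ite_corner_sub [DecidableEq R] (c : ι → Bool → ℝ) (δ : ι → R) :
    (∑ ε : ι → Bool, ∑ ε' : ι → Bool,
        if δ = corner ε' - corner ε then (∏ j, c j (ε j)) * ∏ j, c j (ε' j) else 0) =
      ∏ j, ∑ b, ∑ b', if δ j = (if b' then 1 else 0) - (if b then 1 else 0)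
        then c j b * c j b' else 0 := by
  simp_rw [Fintype.prod_sum, Fintype.prod_ite_zero, prod_mul_distrib, funext_iff]
  rfl

theorem sum_sq_mixedDiff [Fintype R] [DecidableEq R] (T : Finset ι) (f : (ι → R) → ℝ) :
    ∑ y, mixedDiff T f y ^ 2 =
      ∑ δ, (∏ j, if j ∈ T then sumKernel (δ j) else diffKernel (δ j)) * autocorr f δ := by
  simp only [mixedDiff, sum_sq_sum_mul_shift, sum_sum_ite_corner_sub, sum_sum_signWeight]

end MixedDifferences

section SumOfSquares

variable {ι R : Type*} [Fintype ι] [DecidableEq ι] [CommRing R] [DecidableEq R]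

def sosCoeff (T : Finset ι) : ℝ := 3 ^ (Fintype.card ι - 1) + (-1) ^ #Tᶜ * 3 ^ #T

lemma sosCoeff_nonneg (T : Finset ι) : 0 ≤ sosCoeff T := by
  have hcard := card_compl_add_card T
  rcases (#Tᶜ).eq_zero_or_pos with h | h
  · rw [sosCoeff, h, pow_zero, one_mul]; positivity
  · have : (3 : ℝ) ^ #T ≤ 3 ^ (Fintype.card ι - 1) := pow_le_pow_right₀ (by norm_num) (by omega)
    have : -(3 : ℝ) ^ #T ≤ (-1) ^ #Tᶜ * 3 ^ #T := by
      rcases neg_one_pow_eq_or ℝ #Tᶜ with h' | h' <;> rw [h'] <;>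
        linarith [(by positivity : (0 : ℝ) < 3 ^ #T)]
    rw [sosCoeff]; linarith

lemma sosCoeff_univ [Nonempty ι] : sosCoeff (univ : Finset ι) = 4 * 3 ^ (Fintype.card ι - 1) := by
  obtain ⟨d, hd⟩ := Nat.exists_eq_add_one_of_ne_zero (Fintype.card_ne_zero (α := ι))
  rw [sosCoeff, compl_univ, card_empty, card_univ, hd, Nat.add_sub_cancel]
  ring

lemma four_pow_mul_kernel_eq_sum_sosCoeff (δ : ι → R) :
    4 ^ Fintype.card ι * (∏ j, kingKernel (δ j) + 3 ^ (Fintype.card ι - 1) *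
        ∏ j, (if δ j = 0 then 1 else 0)) =
      ∑ T : Finset ι, sosCoeff T * ∏ j, if j ∈ T then sumKernel (δ j) else diffKernel (δ j) := by
  have h4 : ∀ g : ι → ℝ, 4 ^ Fintype.card ι * ∏ j, g j = ∏ j, 4 * g j := by
    intro g; rw [prod_mul_distrib, prod_const, card_univ]
  have hsplit : ∀ T : Finset ι, (∏ j, if j ∈ T then sumKernel (δ j) else diffKernel (δ j)) =
      (∏ j ∈ T, sumKernel (δ j)) * ∏ j ∈ univ \ T, diffKernel (δ j) := by
    intro T
    rw [prod_ite, filter_mem_eq_inter, univ_inter, filter_notMem_eq_sdiff]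
  rw [mul_add, h4, mul_left_comm, h4]
  simp_rw [four_mul_kingKernel, ← sumKernel_add_diffKernel, prod_add, ← powerset_univ, mul_sum,
    ← sum_add_distrib, hsplit]
  refine sum_congr rfl fun T _ => ?_
  rw [prod_mul_distrib, prod_const, prod_neg, ← compl_eq_univ_sdiff, sosCoeff]
  ring

theorem four_pow_mul_kingForm_eq_sum_sosCoeff [Fintype R] (f : (ι → R) → ℝ) :
    4 ^ Fintype.card ι * (∑ δ, (∏ j, kingKernel (δ j)) * autocorr f δ +
        3 ^ (Fintype.card ι - 1) * autocorr f 0) =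
      ∑ T : Finset ι, sosCoeff T * ∑ y, mixedDiff T f y ^ 2 := by
  have hzero : autocorr f 0 = ∑ δ : ι → R, (∏ j, if δ j = 0 then 1 else 0) * autocorr f δ := by
    simp only [Fintype.prod_boole, ← funext_iff, ← Pi.zero_def, ite_mul, one_mul, zero_mul,
      sum_ite_eq', mem_univ, if_true]
  rw [hzero, mul_sum, ← sum_add_distrib, mul_sum]
  simp_rw [sum_sq_mixedDiff, mul_sum]
  rw [sum_comm]
  refine sum_congr rfl fun δ _ => ?_
  simp_rw [← mul_assoc]
  rw [← sum_mul, ← four_pow_mul_kernel_eq_sum_sosCoeff]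
  ring

end SumOfSquares

section Counting

variable {ι R : Type*} [Fintype ι] [DecidableEq ι] [CommRing R] [Fintype R] [DecidableEq R]

theorem sq_sum_le_kingForm [Nonempty ι] (f : (ι → R) → ℝ) :
    4 * 3 ^ (Fintype.card ι - 1) * (∑ x, f x) ^ 2 ≤
      Fintype.card R ^ Fintype.card ι * (∑ δ, (∏ j, kingKernel (δ j)) * autocorr f δ +
        3 ^ (Fintype.card ι - 1) * autocorr f 0) := by
  have hcs : (∑ y, mixedDiff univ f y) ^ 2 ≤
      (Fintype.card R : ℝ) ^ Fintype.card ι * ∑ y, mixedDiff univ f y ^ 2 := by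
    have := sq_sum_le_card_mul_sum_sq (s := univ) (f := mixedDiff (R := R) univ f)
    rwa [card_univ, Fintype.card_fun, Nat.cast_pow] at this
  have hterm : sosCoeff (univ : Finset ι) * ∑ y, mixedDiff univ f y ^ 2 ≤
      ∑ T : Finset ι, sosCoeff T * ∑ y, mixedDiff T f y ^ 2 :=
    single_le_sum (f := fun T => sosCoeff T * ∑ y, mixedDiff T f y ^ 2)
      (fun T _ => mul_nonneg (sosCoeff_nonneg T) (sum_nonneg fun y _ => sq_nonneg _)) (mem_univ _)
  refine le_of_mul_le_mul_left ?_ (by positivity : (0 : ℝ) < 4 ^ Fintype.card ι)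
  calc 4 ^ Fintype.card ι * (4 * 3 ^ (Fintype.card ι - 1) * (∑ x, f x) ^ 2)
      = 4 * 3 ^ (Fintype.card ι - 1) * (∑ y, mixedDiff univ f y) ^ 2 := by
        rw [sum_mixedDiff_univ, mul_pow, ← pow_mul, mul_comm _ 2, pow_mul]
        norm_num
        ring
    _ ≤ 4 * 3 ^ (Fintype.card ι - 1) *
          ((Fintype.card R : ℝ) ^ Fintype.card ι * ∑ y, mixedDiff univ f y ^ 2) := by gcongr
    _ = (Fintype.card R : ℝ) ^ Fintype.card ι *
          (sosCoeff (univ : Finset ι) * ∑ y, mixedDiff univ f y ^ 2) := by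
        rw [sosCoeff_univ]; ring
    _ ≤ (Fintype.card R : ℝ) ^ Fintype.card ι *
          ∑ T : Finset ι, sosCoeff T * ∑ y, mixedDiff T f y ^ 2 := by gcongr
    _ = 4 ^ Fintype.card ι * (Fintype.card R ^ Fintype.card ι *
          (∑ δ, (∏ j, kingKernel (δ j)) * autocorr f δ +
            3 ^ (Fintype.card ι - 1) * autocorr f 0)) := by
        rw [← four_pow_mul_kingForm_eq_sum_sosCoeff]; ring

lemma sum_prod_kingKernel : ∑ δ : ι → R, ∏ j, kingKernel (δ j) = 3 ^ Fintype.card ι := by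
  rw [← Fintype.prod_sum, sum_kingKernel, prod_const, card_univ]

lemma card_cut_eq (h2 : (2 : R) ≠ 0) (L : (ι → R) → Letter) :
    (#{p : (ι → R) × (ι → R) | (∀ j, p.2 j = 0 ∨ p.2 j = 1 ∨ p.2 j = -1) ∧ p.2 ≠ 0 ∧
        L p.1 = Letter.A ∧ (L (p.1 + p.2) = Letter.C ∨ L (p.1 + p.2) = Letter.T)} : ℝ) =
      3 ^ Fintype.card ι * ∑ x, (if L x = Letter.A then 1 else 0) -
        ∑ δ, (∏ j, kingKernel (δ j)) * autocorr (fun x => if L x = Letter.A then 1 else 0) δ := by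
  set a : (ι → R) → ℝ := fun x => if L x = Letter.A then 1 else 0
  have hpoint : ∀ x v : ι → R,
      (if (∀ j, v j = 0 ∨ v j = 1 ∨ v j = -1) ∧ v ≠ 0 ∧ L x = Letter.A ∧
          (L (x + v) = Letter.C ∨ L (x + v) = Letter.T) then (1 : ℝ) else 0) =
        (∏ j, kingKernel (v j)) * (a x * (1 - a (x + v))) := by
    intro x v
    simp only [kingKernel_eq_ite h2, Fintype.prod_boole, a]
    by_cases hv : v = 0
    · subst hv; by_cases hx : L x = Letter.A <;> simp [hx]
    · cases L x <;> cases L (x + v) <;> simp [hv]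
  rw [natCast_card_filter, Fintype.sum_prod_type]
  simp only [hpoint]
  rw [sum_comm]
  simp_rw [← mul_sum, mul_sub, mul_one, sum_sub_distrib, mul_sub, sum_sub_distrib, ← sum_mul,
    sum_prod_kingKernel]
  rfl

theorem card_cut_le (h2 : (2 : R) ≠ 0) (L : (ι → R) → Letter) :
    #{p : (ι → R) × (ι → R) | (∀ j, p.2 j = 0 ∨ p.2 j = 1 ∨ p.2 j = -1) ∧ p.2 ≠ 0 ∧
        L p.1 = Letter.A ∧ (L (p.1 + p.2) = Letter.C ∨ L (p.1 + p.2) = Letter.T)} ≤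
      3 ^ (Fintype.card ι - 1) * Fintype.card R ^ Fintype.card ι := by
  rcases isEmpty_or_nonempty ι with hι | hι
  · simp [Subsingleton.elim _ (0 : ι → R)]
  rw [← Nat.cast_le (α := ℝ), card_cut_eq h2 L]
  set a : (ι → R) → ℝ := fun x => if L x = Letter.A then 1 else 0
  have hkey := sq_sum_le_kingForm a
  have hzero : autocorr a 0 = ∑ x, a x :=
    sum_congr rfl fun x _ => by by_cases hx : L x = Letter.A <;> simp [a, hx]
  have hd : (3 : ℝ) ^ Fintype.card ι = 3 * 3 ^ (Fintype.card ι - 1) := by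
    rw [← pow_succ', Nat.sub_add_cancel Fintype.card_pos]
  have hN : (0 : ℝ) < Fintype.card R ^ Fintype.card ι := by positivity
  rw [hzero] at hkey
  rw [hd, Nat.cast_mul, Nat.cast_pow, Nat.cast_pow, Nat.cast_ofNat]
  refine le_of_mul_le_mul_right ?_ hN
  nlinarith [mul_nonneg (pow_nonneg zero_le_three (Fintype.card ι - 1))
    (sq_nonneg ((Fintype.card R : ℝ) ^ Fintype.card ι - 2 * ∑ x, a x))]

end Counting

end KingGraph

theorem stmt_8 (n d : ℕ) [NeZero n] (hn : 3 ≤ n)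
    (L : (Fin d → ZMod n) → Letter) :
    (Finset.univ.filter
        (fun p : (Fin d → ZMod n) × (Fin d → ZMod n) =>
          (∀ j, p.2 j = 0 ∨ p.2 j = 1 ∨ p.2 j = -1) ∧ p.2 ≠ 0 ∧
          L p.1 = Letter.A ∧
          (L (p.1 + p.2) = Letter.C ∨ L (p.1 + p.2) = Letter.T))).card
      ≤ 3 ^ (d - 1) * n ^ d := by
  have h2 : (2 : ZMod n) ≠ 0 := by
    rw [Ne, ← Nat.cast_ofNat, ZMod.natCast_eq_zero_iff]
    exact Nat.not_dvd_of_pos_of_lt two_pos (by omega)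
  simpa [ZMod.card] using KingGraph.card_cut_le h2 L
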